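/- There exists a universal positive constant A such that for every t ∈ [0,1] there exist a probability space (Ω, F, P) and sub-σ-fields A and B of F such that τ(A, B) ≤ t and ρ(A, B) ≥ A · t · (1 − log t). -/

import Mathlib

open MeasureTheory ProbabilityTheory
open scoped ENNReal

noncomputable def eventCorr {Ω : Type*} {_mΩ : MeasurableSpace Ω} (P : Measure Ω)
    (A B : Set Ω) : ℝ :=
  ((P (A ∩ B)).toReal - (P A).toReal * (P B).toReal) /
    Real.sqrt ((P A).toReal * (1 - (P A).toReal) * (P B).toReal * (1 - (P B).toReal))

noncomputable def tauDep {Ω : Type*} {_mΩ : MeasurableSpace Ω} (P : Measure Ω)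
    (𝒜 ℬ : MeasurableSpace Ω) : ℝ :=
  sSup {r : ℝ | ∃ A B : Set Ω, MeasurableSet[𝒜] A ∧ MeasurableSet[ℬ] B ∧ r = |eventCorr P A B|}

noncomputable def lambdaDep {Ω : Type*} {_mΩ : MeasurableSpace Ω} (P : Measure Ω)
    (𝒜 ℬ : MeasurableSpace Ω) : ℝ :=
  sSup {r : ℝ | ∃ A B : Set Ω, MeasurableSet[𝒜] A ∧ MeasurableSet[ℬ] B ∧
    r = |(P (A ∩ B)).toReal - (P A).toReal * (P B).toReal| /
      Real.sqrt ((P A).toReal * (P B).toReal)}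

noncomputable def psiDep {Ω : Type*} {_mΩ : MeasurableSpace Ω} (P : Measure Ω)
    (𝒜 ℬ : MeasurableSpace Ω) : ℝ≥0∞ :=
  ⨆ (A : Set Ω) (_ : MeasurableSet[𝒜] A) (B : Set Ω) (_ : MeasurableSet[ℬ] B),
    ENNReal.ofReal (|(P (A ∩ B)).toReal - (P A).toReal * (P B).toReal| /
      ((P A).toReal * (P B).toReal))

noncomputable def corrRV {Ω : Type*} {_mΩ : MeasurableSpace Ω} (P : Measure Ω)
    (X Y : Ω → ℝ) : ℝ :=
  (∫ ω, X ω * Y ω ∂P - (∫ ω, X ω ∂P) * (∫ ω, Y ω ∂P)) /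
    Real.sqrt ((∫ ω, X ω ^ 2 ∂P - (∫ ω, X ω ∂P) ^ 2) *
      (∫ ω, Y ω ^ 2 ∂P - (∫ ω, Y ω ∂P) ^ 2))

noncomputable def rhoDep {Ω : Type*} {_mΩ : MeasurableSpace Ω} (P : Measure Ω)
    (𝒜 ℬ : MeasurableSpace Ω) : ℝ :=
  sSup {r : ℝ | ∃ X Y : Ω → ℝ, Measurable[𝒜] X ∧ Measurable[ℬ] Y ∧
    MemLp X 2 P ∧ MemLp Y 2 P ∧ r = |corrRV P X Y|}

/-!
Perturb the square of a law `p` on `{0, …, n}` by the density `1 + ε f(j) f(k)`, with `f`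
centred under `p`. Two events `S × univ` and `univ × T` then have covariance
`ε (∑_S p f) (∑_T p f)`, while `f(X)` and `f(Y)` have correlation `ε Var f`. For the geometric
law `p_k ≈ 4^{-k}` and `f(k) = 2^k - E 2^X`, the weights `p_k 2^k ≈ 2^{-k}` decay geometrically,
which gives `(∑_S p f)^2 ≲ p(S) (1 - p(S))` and hence `τ ≲ ε`, whereas `Var f ≳ n`. Positivity
of the density allows `ε ≈ 4^{-n}`, and choosing `4^{-n} ≈ t` yields `ρ ≳ t log(1/t)`.
-/

section Correlation

variable {Ω : Type*} {mΩ : MeasurableSpace Ω} {P : Measure Ω} {X Y : Ω → ℝ}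

lemma covariance_sq_le_variance_mul [IsFiniteMeasure P] (hX : MemLp X 2 P) (hY : MemLp Y 2 P) :
    cov[X, Y; P] ^ 2 ≤ Var[X; P] * Var[Y; P] := by
  have hquad : ∀ c : ℝ, 0 ≤ Var[X; P] * (c * c) + 2 * cov[X, Y; P] * c + Var[Y; P] := by
    intro c
    have h := variance_add (hX.const_smul c) hY
    rw [variance_smul, covariance_smul_left] at h
    nlinarith [variance_nonneg (c • X + Y) P]
  have := discrim_le_zero hquad
  rw [discrim] at this
  nlinarith

lemma corrRV_eq_covariance_div [IsProbabilityMeasure P] (hX : MemLp X 2 P) (hY : MemLp Y 2 P) :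
    corrRV P X Y = cov[X, Y; P] / √(Var[X; P] * Var[Y; P]) := by
  rw [corrRV, covariance_eq_sub hX hY, variance_eq_sub hX, variance_eq_sub hY]
  rfl

lemma abs_corrRV_le_one [IsProbabilityMeasure P] (hX : MemLp X 2 P) (hY : MemLp Y 2 P) :
    |corrRV P X Y| ≤ 1 := by
  rw [corrRV_eq_covariance_div hX hY, abs_div, abs_of_nonneg (Real.sqrt_nonneg _)]
  exact div_le_one_of_le₀ (Real.abs_le_sqrt (covariance_sq_le_variance_mul hX hY))
    (Real.sqrt_nonneg _)

lemma abs_corrRV_le_rhoDep [IsProbabilityMeasure P] {𝒜 ℬ : MeasurableSpace Ω}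
    (hX𝒜 : Measurable[𝒜] X) (hYℬ : Measurable[ℬ] Y) (hX : MemLp X 2 P) (hY : MemLp Y 2 P) :
    |corrRV P X Y| ≤ rhoDep P 𝒜 ℬ := by
  refine le_csSup ⟨1, ?_⟩ ⟨X, Y, hX𝒜, hYℬ, hX, hY, rfl⟩
  rintro r ⟨X', Y', -, -, hX', hY', rfl⟩
  exact abs_corrRV_le_one hX' hY'

lemma tauDep_le {𝒜 ℬ : MeasurableSpace Ω} {c : ℝ} (hc : 0 ≤ c)
    (h : ∀ A B, MeasurableSet[𝒜] A → MeasurableSet[ℬ] B → |eventCorr P A B| ≤ c) :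
    tauDep P 𝒜 ℬ ≤ c := by
  refine Real.sSup_le ?_ hc
  rintro r ⟨A, B, hA, hB, rfl⟩
  exact h A B hA hB

end Correlation

section WeightedMeasure

variable {β : Type*} [Fintype β] [MeasurableSpace β] {w : β → ℝ}

noncomputable def weightedMeasure (w : β → ℝ) : Measure β :=
  ∑ x, ENNReal.ofReal (w x) • Measure.dirac x

lemma integral_weightedMeasure [MeasurableSingletonClass β] (hw : ∀ x, 0 ≤ w x) (φ : β → ℝ) :
    ∫ x, φ x ∂weightedMeasure w = ∑ x, w x * φ x := by
  rw [weightedMeasure, integral_finsetSum_measure fun _ _ =>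
    Integrable.of_finite.smul_measure ENNReal.ofReal_ne_top]
  simp [integral_dirac, ENNReal.toReal_ofReal (hw _)]

lemma isProbabilityMeasure_weightedMeasure (hw : ∀ x, 0 ≤ w x) (h1 : ∑ x, w x = 1) :
    IsProbabilityMeasure (weightedMeasure w) := by
  constructor
  rw [weightedMeasure, Measure.finsetSum_apply]
  simp [← ENNReal.ofReal_sum_of_nonneg fun x _ => hw x, h1]

end WeightedMeasure

section PerturbedProduct

variable {α : Type*} {p f : α → ℝ} {ε : ℝ}

noncomputable def perturbedWeight (p f : α → ℝ) (ε : ℝ) (x : α × α) : ℝ :=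
  p x.1 * p x.2 * (1 + ε * (f x.1 * f x.2))

lemma perturbedWeight_nonneg (hp : ∀ j, 0 ≤ p j) (hε : ∀ j k, 0 ≤ 1 + ε * (f j * f k))
    (x : α × α) : 0 ≤ perturbedWeight p f ε x :=
  mul_nonneg (mul_nonneg (hp _) (hp _)) (hε _ _)

variable [Fintype α]

lemma sum_perturbedWeight_mul (a b : α → ℝ) :
    ∑ x, perturbedWeight p f ε x * (a x.1 * b x.2)
      = (∑ j, p j * a j) * (∑ k, p k * b k)
        + ε * ((∑ j, p j * f j * a j) * (∑ k, p k * f k * b k)) := by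
  rw [Finset.sum_mul_sum, Finset.sum_mul_sum, Finset.mul_sum, ← Finset.sum_add_distrib,
    Fintype.sum_prod_type]
  refine Finset.sum_congr rfl fun j _ => ?_
  rw [Finset.mul_sum, ← Finset.sum_add_distrib]
  exact Finset.sum_congr rfl fun k _ => by rw [perturbedWeight]; ring

lemma sq_sum_le_mul_mass_mul_compl [DecidableEq α] (hp : ∀ j, 0 ≤ p j) (hsum : ∑ j, p j = 1)
    (hcent : ∑ j, p j * f j = 0) {K : ℝ}
    (hK : ∀ s : Finset α, (∑ j ∈ s, p j * f j) ^ 2 ≤ K * ∑ j ∈ s, p j) (s : Finset α) :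
    (∑ j ∈ s, p j * f j) ^ 2 ≤ 2 * K * ((∑ j ∈ s, p j) * (1 - ∑ j ∈ s, p j)) := by
  have hu : ∑ j ∈ sᶜ, p j * f j = -∑ j ∈ s, p j * f j := by
    linarith [Finset.sum_compl_add_sum s fun j => p j * f j]
  have ha : ∑ j ∈ sᶜ, p j = 1 - ∑ j ∈ s, p j := by linarith [Finset.sum_compl_add_sum s p]
  have h₁ := hK s
  have h₂ := hK sᶜ
  rw [hu, ha, neg_sq] at h₂
  have ha₀ : 0 ≤ ∑ j ∈ s, p j := Finset.sum_nonneg fun j _ => hp j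
  have ha₁ : 0 ≤ 1 - ∑ j ∈ s, p j := ha ▸ Finset.sum_nonneg fun j _ => hp j
  rcases le_total (∑ j ∈ s, p j) (1 / 2) with h | h <;>
    nlinarith [sq_nonneg (∑ j ∈ s, p j * f j)]

variable [MeasurableSpace α]

noncomputable def perturbedProduct (p f : α → ℝ) (ε : ℝ) : Measure (α × α) :=
  weightedMeasure (perturbedWeight p f ε)

lemma isProbabilityMeasure_perturbedProduct (hp : ∀ j, 0 ≤ p j)
    (hε : ∀ j k, 0 ≤ 1 + ε * (f j * f k)) (hsum : ∑ j, p j = 1) (hcent : ∑ j, p j * f j = 0) :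
    IsProbabilityMeasure (perturbedProduct p f ε) := by
  refine isProbabilityMeasure_weightedMeasure (perturbedWeight_nonneg hp hε) ?_
  simpa [hsum, hcent] using sum_perturbedWeight_mul (p := p) (f := f) (ε := ε) 1 1

variable [MeasurableSingletonClass α]

lemma integral_perturbedProduct (hp : ∀ j, 0 ≤ p j)
    (hε : ∀ j k, 0 ≤ 1 + ε * (f j * f k)) (a b : α → ℝ) :
    ∫ x, a x.1 * b x.2 ∂perturbedProduct p f ε
      = (∑ j, p j * a j) * (∑ k, p k * b k)
        + ε * ((∑ j, p j * f j * a j) * (∑ k, p k * f k * b k)) := by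
  rw [perturbedProduct, integral_weightedMeasure (perturbedWeight_nonneg hp hε),
    sum_perturbedWeight_mul]

lemma measureReal_prod_perturbedProduct (hp : ∀ j, 0 ≤ p j)
    (hε : ∀ j k, 0 ≤ 1 + ε * (f j * f k)) (s t : Finset α) :
    (perturbedProduct p f ε).real (↑s ×ˢ ↑t)
      = (∑ j ∈ s, p j) * (∑ k ∈ t, p k) + ε * ((∑ j ∈ s, p j * f j) * (∑ k ∈ t, p k * f k)) := by
  classical
  have hind : ((↑s ×ˢ ↑t : Set (α × α)).indicator 1 : α × α → ℝ)
      = fun x => (↑s : Set α).indicator 1 x.1 * (↑t : Set α).indicator 1 x.2 :=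
    funext fun _ => Set.indicator_prod_one
  rw [← integral_indicator_one (Set.toFinite _).measurableSet, hind,
    integral_perturbedProduct hp hε]
  simp [Set.indicator_apply, Finset.sum_ite_mem]

lemma abs_eventCorr_perturbedProduct_le (hp : ∀ j, 0 ≤ p j)
    (hε : ∀ j k, 0 ≤ 1 + ε * (f j * f k)) (hsum : ∑ j, p j = 1) (hcent : ∑ j, p j * f j = 0)
    (hε₀ : 0 ≤ ε) {K : ℝ} (hK₀ : 0 ≤ K)
    (hK : ∀ s : Finset α, (∑ j ∈ s, p j * f j) ^ 2 ≤ K * ((∑ j ∈ s, p j) * (1 - ∑ j ∈ s, p j)))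
    (s t : Finset α) :
    |eventCorr (perturbedProduct p f ε) (Prod.fst ⁻¹' ↑s) (Prod.snd ⁻¹' ↑t)| ≤ K * ε := by
  have hQ := measureReal_prod_perturbedProduct hp hε
  set a := ∑ j ∈ s, p j
  set b := ∑ k ∈ t, p k
  set u := ∑ j ∈ s, p j * f j
  set v := ∑ k ∈ t, p k * f k
  have hA : (perturbedProduct p f ε).real (Prod.fst ⁻¹' ↑s) = a := by
    rw [← Set.prod_univ, ← Finset.coe_univ, hQ, hsum, hcent]; ring
  have hB : (perturbedProduct p f ε).real (Prod.snd ⁻¹' ↑t) = b := by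
    rw [← Set.univ_prod, ← Finset.coe_univ, hQ, hsum, hcent]; ring
  have huv : |u * v| ≤ K * √(a * (1 - a) * b * (1 - b)) := by
    have hsq : (u * v) ^ 2 ≤ K ^ 2 * (a * (1 - a) * b * (1 - b)) := by
      have := mul_le_mul (hK s) (hK t) (sq_nonneg v) ((sq_nonneg u).trans (hK s))
      linarith
    rw [← Real.sqrt_sq hK₀, ← Real.sqrt_mul (sq_nonneg K)]
    exact Real.abs_le_sqrt hsq
  have hAB : (perturbedProduct p f ε).real (Prod.fst ⁻¹' ↑s ∩ Prod.snd ⁻¹' ↑t)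
      = a * b + ε * (u * v) := hQ s t
  simp only [eventCorr, ← measureReal_def, hAB, hA, hB, add_sub_cancel_left]
  rw [abs_div, abs_of_nonneg (Real.sqrt_nonneg _)]
  refine div_le_of_le_mul₀ (Real.sqrt_nonneg _) (mul_nonneg hK₀ hε₀) ?_
  rw [abs_mul, abs_of_nonneg hε₀]
  nlinarith [abs_nonneg (u * v)]

lemma tauDep_perturbedProduct_le (hp : ∀ j, 0 ≤ p j)
    (hε : ∀ j k, 0 ≤ 1 + ε * (f j * f k)) (hsum : ∑ j, p j = 1) (hcent : ∑ j, p j * f j = 0)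
    (hε₀ : 0 ≤ ε) {K : ℝ} (hK₀ : 0 ≤ K)
    (hK : ∀ s : Finset α, (∑ j ∈ s, p j * f j) ^ 2 ≤ K * ((∑ j ∈ s, p j) * (1 - ∑ j ∈ s, p j))) :
    tauDep (perturbedProduct p f ε) (.comap Prod.fst ‹_›) (.comap Prod.snd ‹_›) ≤ K * ε := by
  classical
  refine tauDep_le (mul_nonneg hK₀ hε₀) ?_
  rintro _ _ ⟨S, -, rfl⟩ ⟨T, -, rfl⟩
  rw [← Set.coe_toFinset S, ← Set.coe_toFinset T]
  exact abs_eventCorr_perturbedProduct_le hp hε hsum hcent hε₀ hK₀ hK _ _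

lemma corrRV_perturbedProduct (hp : ∀ j, 0 ≤ p j)
    (hε : ∀ j k, 0 ≤ 1 + ε * (f j * f k)) (hsum : ∑ j, p j = 1) (hcent : ∑ j, p j * f j = 0) :
    corrRV (perturbedProduct p f ε) (fun x => f x.1) (fun x => f x.2)
      = ε * ∑ j, p j * f j ^ 2 := by
  have hmom := integral_perturbedProduct hp hε
  have hsq : ∑ j, p j * f j * f j = ∑ j, p j * f j ^ 2 :=
    Finset.sum_congr rfl fun j _ => by ring
  have h₁ : ∫ x, f x.1 ∂perturbedProduct p f ε = 0 := by simpa [hsum, hcent] using hmom f 1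
  have h₂ : ∫ x, f x.2 ∂perturbedProduct p f ε = 0 := by simpa [hsum, hcent] using hmom 1 f
  have h₁₁ : ∫ x, f x.1 ^ 2 ∂perturbedProduct p f ε = ∑ j, p j * f j ^ 2 := by
    simpa [hsum, hcent] using hmom (fun j => f j ^ 2) 1
  have h₂₂ : ∫ x, f x.2 ^ 2 ∂perturbedProduct p f ε = ∑ j, p j * f j ^ 2 := by
    simpa [hsum, hcent] using hmom 1 (fun j => f j ^ 2)
  have h₁₂ : ∫ x, f x.1 * f x.2 ∂perturbedProduct p f ε = ε * (∑ j, p j * f j ^ 2) ^ 2 := by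
    rw [hmom, hcent, hsq]; ring
  have hV : 0 ≤ ∑ j, p j * f j ^ 2 := Finset.sum_nonneg fun j _ => by have := hp j; positivity
  rw [corrRV, h₁, h₂, h₁₁, h₂₂, h₁₂, mul_zero, sub_zero, zero_pow two_ne_zero, sub_zero,
    Real.sqrt_mul_self hV, sq, mul_div_assoc, mul_self_div_self]

lemma le_rhoDep_perturbedProduct (hp : ∀ j, 0 ≤ p j)
    (hε : ∀ j k, 0 ≤ 1 + ε * (f j * f k)) (hsum : ∑ j, p j = 1) (hcent : ∑ j, p j * f j = 0)
    (hε₀ : 0 ≤ ε) :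
    ε * ∑ j, p j * f j ^ 2
      ≤ rhoDep (perturbedProduct p f ε) (.comap Prod.fst ‹_›) (.comap Prod.snd ‹_›) := by
  have := isProbabilityMeasure_perturbedProduct hp hε hsum hcent
  have hV : 0 ≤ ∑ j, p j * f j ^ 2 := Finset.sum_nonneg fun j _ => by have := hp j; positivity
  calc ε * ∑ j, p j * f j ^ 2
      = |corrRV (perturbedProduct p f ε) (fun x => f x.1) (fun x => f x.2)| := by
        rw [corrRV_perturbedProduct hp hε hsum hcent, abs_of_nonneg (mul_nonneg hε₀ hV)]
    _ ≤ _ := abs_corrRV_le_rhoDep ((measurable_of_finite f).comp (comap_measurable _))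
        ((measurable_of_finite f).comp (comap_measurable _)) .of_discrete .of_discrete

end PerturbedProduct

lemma sum_pow_le_pow_div_one_sub {x : ℝ} (hx₀ : 0 ≤ x) (hx₁ : x < 1) {s : Finset ℕ} {m : ℕ}
    (hm : ∀ k ∈ s, m ≤ k) : ∑ k ∈ s, x ^ k ≤ x ^ m / (1 - x) := by
  have hsub : s ⊆ Finset.Ico m (s.sup id + 1) := fun k hk =>
    Finset.mem_Ico.2 ⟨hm k hk, Nat.lt_succ_of_le (Finset.le_sup (f := id) hk)⟩
  calc ∑ k ∈ s, x ^ k ≤ ∑ k ∈ Finset.Ico m (s.sup id + 1), x ^ k :=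
        Finset.sum_le_sum_of_subset_of_nonneg hsub fun k _ _ => pow_nonneg hx₀ k
    _ ≤ x ^ m / (1 - x) := geom_sum_Ico_le_of_lt_one hx₀ hx₁

section GeometricExample

variable {n : ℕ}

/-- The geometric law `3/4 · 4⁻ᵏ` on `ℕ`, with its mass beyond `n` lumped into the atom `n`. -/
noncomputable def geomWeight (n : ℕ) (k : Fin (n + 1)) : ℝ :=
  if (k : ℕ) < n then 3 / 4 * 4⁻¹ ^ (k : ℕ) else 4⁻¹ ^ n

noncomputable def geomMean (n : ℕ) : ℝ := ∑ k, geomWeight n k * 2 ^ (k : ℕ)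

noncomputable def geomScore (n : ℕ) (k : Fin (n + 1)) : ℝ := 2 ^ (k : ℕ) - geomMean n

lemma geomWeight_le (k : Fin (n + 1)) : geomWeight n k ≤ 4⁻¹ ^ (k : ℕ) := by
  unfold geomWeight
  split_ifs with h
  · linarith [pow_nonneg (show (0 : ℝ) ≤ 4⁻¹ by norm_num) (k : ℕ)]
  · rw [show (k : ℕ) = n by omega]

lemma le_geomWeight (k : Fin (n + 1)) : 3 / 4 * 4⁻¹ ^ (k : ℕ) ≤ geomWeight n k := by
  unfold geomWeight
  split_ifs with h
  · rfl
  · rw [show (k : ℕ) = n by omega]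
    linarith [pow_nonneg (show (0 : ℝ) ≤ 4⁻¹ by norm_num) n]

lemma geomWeight_nonneg (k : Fin (n + 1)) : 0 ≤ geomWeight n k :=
  le_trans (by positivity) (le_geomWeight k)

lemma sum_geomWeight : ∑ k, geomWeight n k = 1 := by
  have hlt : ∀ i : Fin n, geomWeight n i.castSucc = 3 / 4 * 4⁻¹ ^ (i : ℕ) := fun i => by
    simp [geomWeight]
  have hgeom : ∑ i ∈ Finset.range n, (4⁻¹ : ℝ) ^ i = (4⁻¹ ^ n - 1) / (4⁻¹ - 1) :=
    geom_sum_eq (by norm_num) n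
  rw [Fin.sum_univ_castSucc, Finset.sum_congr rfl fun i _ => hlt i, ← Finset.mul_sum,
    Fin.sum_univ_eq_sum_range (fun i => (4⁻¹ : ℝ) ^ i), hgeom]
  simp only [geomWeight, Fin.val_last, lt_irrefl, if_false]
  ring

lemma geomWeight_mul_two_pow_le (k : Fin (n + 1)) :
    geomWeight n k * 2 ^ (k : ℕ) ≤ 2⁻¹ ^ (k : ℕ) := by
  calc geomWeight n k * 2 ^ (k : ℕ) ≤ 4⁻¹ ^ (k : ℕ) * 2 ^ (k : ℕ) :=
        mul_le_mul_of_nonneg_right (geomWeight_le k) (by positivity)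
    _ = 2⁻¹ ^ (k : ℕ) := by rw [← mul_pow]; norm_num

lemma sum_geomWeight_mul_two_pow_le {s : Finset (Fin (n + 1))} {m : ℕ}
    (hm : ∀ k ∈ s, m ≤ (k : ℕ)) : ∑ k ∈ s, geomWeight n k * 2 ^ (k : ℕ) ≤ 2 * 2⁻¹ ^ m := by
  have htail : ∑ k ∈ s.map Fin.valEmbedding, (2⁻¹ : ℝ) ^ k ≤ 2⁻¹ ^ m / (1 - 2⁻¹) :=
    sum_pow_le_pow_div_one_sub (by norm_num) (by norm_num) (by simpa using hm)
  rw [Finset.sum_map, show (1 - 2⁻¹ : ℝ) = 2⁻¹ by norm_num, div_inv_eq_mul, mul_comm] at htail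
  exact (Finset.sum_le_sum fun k _ => geomWeight_mul_two_pow_le k).trans htail

lemma geomMean_nonneg : 0 ≤ geomMean n :=
  Finset.sum_nonneg fun k _ => mul_nonneg (geomWeight_nonneg k) (by positivity)

lemma geomMean_le_two : geomMean n ≤ 2 := by
  simpa [geomMean] using
    sum_geomWeight_mul_two_pow_le (s := Finset.univ) (n := n) (m := 0) (by simp)

lemma sum_geomWeight_mul_geomScore : ∑ k, geomWeight n k * geomScore n k = 0 := by
  simp only [geomScore, mul_sub, Finset.sum_sub_distrib, ← Finset.sum_mul, sum_geomWeight]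
  rw [geomMean]; ring

/- `geomWeight n k * 2 ^ k ≤ 2⁻¹ ^ k`, so the sum is dominated by the first atom `m` of `s`,
whose mass is of order `(2⁻¹ ^ m) ^ 2`. -/
lemma sq_sum_geomWeight_mul_geomScore_le (s : Finset (Fin (n + 1))) :
    (∑ k ∈ s, geomWeight n k * geomScore n k) ^ 2 ≤ 10 * ∑ k ∈ s, geomWeight n k := by
  rcases s.eq_empty_or_nonempty with rfl | hs
  · simp
  set m : ℕ := (s.min' hs).val
  set a := ∑ k ∈ s, geomWeight n k
  set A := ∑ k ∈ s, geomWeight n k * 2 ^ (k : ℕ)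
  have hsplit : ∑ k ∈ s, geomWeight n k * geomScore n k = A - geomMean n * a := by
    rw [Finset.mul_sum, ← Finset.sum_sub_distrib]
    exact Finset.sum_congr rfl fun k _ => by rw [geomScore]; ring
  have hA₀ : 0 ≤ A := Finset.sum_nonneg fun k _ => mul_nonneg (geomWeight_nonneg k) (by positivity)
  have hA : A ≤ 2 * 2⁻¹ ^ m :=
    sum_geomWeight_mul_two_pow_le fun k hk => Fin.le_iff_val_le_val.1 (s.min'_le k hk)
  have ha₀ : 0 ≤ a := Finset.sum_nonneg fun k _ => geomWeight_nonneg k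
  have ha₁ : a ≤ 1 := sum_geomWeight (n := n) ▸
    Finset.sum_le_sum_of_subset_of_nonneg (s.subset_univ) fun k _ _ => geomWeight_nonneg k
  have hmin : (2⁻¹ ^ m : ℝ) ^ 2 ≤ 4 / 3 * a := by
    have h := (le_geomWeight (s.min' hs)).trans
      (Finset.single_le_sum (fun k _ => geomWeight_nonneg k) (s.min'_mem hs))
    rw [← pow_mul, mul_comm, pow_mul]
    norm_num at h ⊢
    linarith
  have hB₀ : 0 ≤ geomMean n * a := mul_nonneg geomMean_nonneg ha₀
  have hB : geomMean n * a ≤ 2 * a := mul_le_mul_of_nonneg_right geomMean_le_two ha₀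
  have hA2 : A ^ 2 ≤ 4 * (2⁻¹ ^ m) ^ 2 := by nlinarith
  rw [hsplit]
  nlinarith [mul_nonneg hA₀ hB₀]

lemma abs_geomScore_le (k : Fin (n + 1)) : |geomScore n k| ≤ 2 * 2 ^ n := by
  have hk : (2 : ℝ) ^ (k : ℕ) ≤ 2 ^ n := pow_le_pow_right₀ (by norm_num) (Nat.lt_succ_iff.1 k.2)
  have h1 : (1 : ℝ) ≤ 2 ^ n := one_le_pow₀ (by norm_num)
  rw [geomScore, abs_sub_le_iff]
  constructor <;> linarith [geomMean_nonneg (n := n), geomMean_le_two (n := n),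
    pow_nonneg (show (0 : ℝ) ≤ 2 by norm_num) (k : ℕ)]

lemma one_add_mul_geomScore_nonneg {ε : ℝ} (hε₀ : 0 ≤ ε) (hε : ε ≤ 4⁻¹ ^ n / 4)
    (j k : Fin (n + 1)) : 0 ≤ 1 + ε * (geomScore n j * geomScore n k) := by
  have hprod : |geomScore n j * geomScore n k| ≤ 4 * 4 ^ n := by
    rw [abs_mul, show (4 : ℝ) * 4 ^ n = (2 * 2 ^ n) * (2 * 2 ^ n) by
      rw [show (4 : ℝ) = 2 * 2 by norm_num, mul_pow]; ring]
    exact mul_le_mul (abs_geomScore_le j) (abs_geomScore_le k) (abs_nonneg _) (by positivity)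
  have hεprod : ε * |geomScore n j * geomScore n k| ≤ 1 :=
    calc ε * |geomScore n j * geomScore n k| ≤ 4⁻¹ ^ n / 4 * (4 * 4 ^ n) :=
          mul_le_mul hε hprod (abs_nonneg _) (by positivity)
      _ = 1 := by rw [inv_pow]; field_simp
  nlinarith [neg_abs_le (geomScore n j * geomScore n k)]

lemma le_sum_geomWeight_mul_geomScore_sq :
    3 * (n + 1) / 4 - 4 ≤ ∑ k, geomWeight n k * geomScore n k ^ 2 := by
  have hvar : ∑ k, geomWeight n k * geomScore n k ^ 2
      = ∑ k, geomWeight n k * 4 ^ (k : ℕ) - geomMean n ^ 2 := by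
    have hterm : ∀ k : Fin (n + 1), geomWeight n k * geomScore n k ^ 2
        = geomWeight n k * 4 ^ (k : ℕ) - 2 * geomMean n * (geomWeight n k * 2 ^ (k : ℕ))
          + geomMean n ^ 2 * geomWeight n k := fun k => by
      rw [geomScore, show (4 : ℝ) ^ (k : ℕ) = (2 ^ (k : ℕ)) ^ 2 by
        rw [← pow_mul, mul_comm, pow_mul]; norm_num]
      ring
    rw [Finset.sum_congr rfl fun k _ => hterm k, Finset.sum_add_distrib, Finset.sum_sub_distrib,
      ← Finset.mul_sum, ← Finset.mul_sum, sum_geomWeight, ← geomMean]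
    ring
  have hatom : ∀ k : Fin (n + 1), 3 / 4 ≤ geomWeight n k * 4 ^ (k : ℕ) := fun k =>
    calc (3 / 4 : ℝ) = 3 / 4 * 4⁻¹ ^ (k : ℕ) * 4 ^ (k : ℕ) := by
          rw [inv_pow]; field_simp
      _ ≤ geomWeight n k * 4 ^ (k : ℕ) :=
          mul_le_mul_of_nonneg_right (le_geomWeight k) (by positivity)
  have hsum := Finset.card_nsmul_le_sum Finset.univ _ _ fun k _ => hatom k
  simp only [Finset.card_univ, Fintype.card_fin, nsmul_eq_mul, Nat.cast_add, Nat.cast_one] at hsum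
  nlinarith [geomMean_nonneg (n := n), geomMean_le_two (n := n)]

end GeometricExample

lemma exists_tauDep_le_le_rhoDep (n : ℕ) {ε : ℝ} (hε₀ : 0 ≤ ε) (hε : ε ≤ 4⁻¹ ^ n / 4) :
    ∃ (Ω : Type) (mΩ : MeasurableSpace Ω) (P : Measure Ω), IsProbabilityMeasure P ∧
      ∃ 𝒜 ℬ : MeasurableSpace Ω, 𝒜 ≤ mΩ ∧ ℬ ≤ mΩ ∧
        tauDep P 𝒜 ℬ ≤ 20 * ε ∧ ε * (3 * (n + 1) / 4 - 4) ≤ rhoDep P 𝒜 ℬ := by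
  have hpos := one_add_mul_geomScore_nonneg hε₀ hε
  have hcent := sum_geomWeight_mul_geomScore (n := n)
  have hK := sq_sum_le_mul_mass_mul_compl geomWeight_nonneg sum_geomWeight hcent
    sq_sum_geomWeight_mul_geomScore_le
  refine ⟨_, inferInstance, perturbedProduct (geomWeight n) (geomScore n) ε,
    isProbabilityMeasure_perturbedProduct geomWeight_nonneg hpos sum_geomWeight hcent,
    _, _, measurable_fst.comap_le, measurable_snd.comap_le, ?_, ?_⟩
  · exact (tauDep_perturbedProduct_le geomWeight_nonneg hpos sum_geomWeight hcent hε₀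
      (by norm_num) hK).trans_eq (by ring)
  · exact (mul_le_mul_of_nonneg_left le_sum_geomWeight_mul_geomScore_sq hε₀).trans
      (le_rhoDep_perturbedProduct geomWeight_nonneg hpos sum_geomWeight hcent hε₀)

lemma exists_nat_pow_four_near {t : ℝ} (ht : t ∈ Set.Icc (0 : ℝ) 1) :
    ∃ m : ℕ, t ≤ 4 * 4⁻¹ ^ m ∧ -Real.log t ≤ 2 * m := by
  rcases ht.1.eq_or_lt with rfl | ht₀
  · exact ⟨0, by norm_num⟩
  obtain ⟨k, hk, hk'⟩ := exists_nat_pow_near (one_le_inv₀ ht₀ |>.2 ht.2) (by norm_num : (1 : ℝ) < 4)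
  refine ⟨k + 1, ?_, ?_⟩
  · calc t ≤ (4 ^ k)⁻¹ := (le_inv_comm₀ ht₀ (by positivity)).2 hk
      _ = 4 * 4⁻¹ ^ (k + 1) := by rw [pow_succ, inv_pow]; ring
  · have hlog4 : Real.log 4 ≤ 2 := by
      have h4 : Real.log 4 = 2 * Real.log 2 := by
        rw [show (4 : ℝ) = 2 ^ 2 by norm_num, Real.log_pow]; norm_num
      linarith [Real.log_le_sub_one_of_pos (show (0 : ℝ) < 2 by norm_num)]
    have := Real.log_lt_log (inv_pos.2 ht₀) hk'
    rw [Real.log_inv, Real.log_pow] at this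
    push_cast at this ⊢
    nlinarith [Real.log_pos (show (1 : ℝ) < 4 by norm_num)]

/-- Bradley–Bryc–Janson: ∃ universal A > 0 such that for every t ∈ [0,1] there is an
example with τ ≤ t and ρ ≥ A·t·(1 − log t). -/
theorem stmt14 : ∃ c : ℝ, 0 < c ∧
    ∀ t ∈ Set.Icc (0:ℝ) 1,
      ∃ (Ω : Type) (mΩ : MeasurableSpace Ω) (P : Measure Ω),
        IsProbabilityMeasure P ∧
        ∃ 𝒜 ℬ : MeasurableSpace Ω, 𝒜 ≤ mΩ ∧ ℬ ≤ mΩ ∧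
          tauDep P 𝒜 ℬ ≤ t ∧ rhoDep P 𝒜 ℬ ≥ c * (t * (1 - Real.log t)) := by
  refine ⟨3 / 8 * 4⁻¹ ^ 7, by norm_num, fun t ht => ?_⟩
  obtain ⟨m, hmt, hmlog⟩ := exists_nat_pow_four_near ht
  have hε₀ : 0 ≤ 4⁻¹ ^ 7 * t := mul_nonneg (by norm_num) ht.1
  have hε : 4⁻¹ ^ 7 * t ≤ 4⁻¹ ^ (m + 5) / 4 := by
    rw [pow_add]; nlinarith [pow_pos (show (0 : ℝ) < 4⁻¹ by norm_num) m]
  obtain ⟨Ω, mΩ, P, hP, 𝒜, ℬ, h𝒜, hℬ, hτ, hρ⟩ := exists_tauDep_le_le_rhoDep (m + 5) hε₀ hε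
  refine ⟨Ω, mΩ, P, hP, 𝒜, ℬ, h𝒜, hℬ, by linarith [ht.1], hρ.trans' ?_⟩
  push_cast
  nlinarith [ht.1]
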